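/- The value function x is convex on (0, ∞): for all s₁, s₂ > 0 and all μ ∈ [0, 1], x(μ·s₁ + (1 − μ)·s₂) ≤ μ·x(s₁) + (1 − μ)·x(s₂). -/

import Mathlib

open BigOperators ENNReal

/-- The per-link cost `f(b) = t / ((1/2)·ln(e^{2t} + b/σ) − t)` for `b > 0`, with the
convention that it is `+∞` when `b ≤ 0` (the denominator vanishes at `b = 0`). -/
noncomputable def fCost (t σ b : ℝ) : ℝ≥0∞ :=
  if 0 < b then
    ENNReal.ofReal (t / ((1 / 2) * Real.log (Real.exp (2 * t) + b / σ) - t))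
  else ⊤

/-- The value function
`x(s) = inf { ∑_{l∈S} f_l(b_l) : b_l ≥ 0 for all l, ∑_{l∈S} b_l ≤ s }`,
with values in `[0, +∞]`. -/
noncomputable def xval (S : Type) [Fintype S] (t σ : S → ℝ) (s : ℝ) : ℝ≥0∞ :=
  sInf { v : ℝ≥0∞ | ∃ b : S → ℝ,
    (∀ l, 0 ≤ b l) ∧ (∑ l, b l) ≤ s ∧ v = ∑ l, fCost (t l) (σ l) (b l) }

/-! Each link cost is convex: on `(0, ∞)` it is a nonnegative constant divided by the positive
concave function `b ↦ (1/2)·ln(e^{2t} + b/σ) − t`, and the value `+∞` off `(0, ∞)` cannot break a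
convexity inequality with positive weights. The budget constraint is a convex set of pairs
(allocation, budget), and minimising a convex cost over the fibres of a convex set gives a convex
function of the budget. Convexity of `ℝ≥0∞`-valued functions is expressed with `ℝ≥0` weights. -/

open Set
open scoped NNReal ENNReal

section ConvexSum

variable {𝕜 E β ι : Type*} [Semiring 𝕜] [PartialOrder 𝕜] [AddCommMonoid E] [SMul 𝕜 E]
  [AddCommMonoid β] [PartialOrder β] [IsOrderedAddMonoid β] [DistribSMul 𝕜 β]

theorem ConvexOn.fun_sum {s : Set E} {f : ι → E → β} (T : Finset ι) (hs : Convex 𝕜 s)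
    (hf : ∀ i ∈ T, ConvexOn 𝕜 s (f i)) : ConvexOn 𝕜 s fun x => ∑ i ∈ T, f i x := by
  refine ⟨hs, fun x hx y hy a b ha hb hab => ?_⟩
  calc ∑ i ∈ T, f i (a • x + b • y) ≤ ∑ i ∈ T, (a • f i x + b • f i y) :=
        Finset.sum_le_sum fun i hi => (hf i hi).2 hx hy ha hb hab
    _ = a • ∑ i ∈ T, f i x + b • ∑ i ∈ T, f i y := by
        rw [Finset.sum_add_distrib, Finset.smul_sum, Finset.smul_sum]

end ConvexSum

theorem ConcaveOn.convexOn_div {s : Set ℝ} {g : ℝ → ℝ} {c : ℝ} (hg : ConcaveOn ℝ s g)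
    (hpos : ∀ x ∈ s, 0 < g x) (hc : 0 ≤ c) : ConvexOn ℝ s fun x => c / g x := by
  have hdiv : ConvexOn ℝ (Ioi 0) fun y : ℝ => c / y := by
    simpa [div_eq_mul_inv] using (convexOn_zpow (𝕜 := ℝ) (-1)).smul hc
  refine ⟨hg.1, fun x hx y hy a b ha hb hab => ?_⟩
  have hx' := hpos x hx
  have hy' := hpos y hy
  calc c / g (a • x + b • y) ≤ c / (a • g x + b • g y) :=
        div_le_div_of_nonneg_left hc (hdiv.1 hx' hy' ha hb hab) (hg.2 hx hy ha hb hab)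
    _ ≤ a • (c / g x) + b • (c / g y) := hdiv.2 hx' hy' ha hb hab

theorem ConvexOn.convexOn_ite_ofReal_top {f : ℝ → ℝ} (hf : ConvexOn ℝ (Ioi 0) f) :
    ConvexOn ℝ≥0 univ fun x => if 0 < x then ENNReal.ofReal (f x) else ⊤ := by
  refine ⟨convex_univ, fun x _ y _ a b _ _ hab => ?_⟩
  rcases eq_or_ne a 0 with rfl | ha
  · rw [zero_add] at hab; subst hab; simp
  rcases eq_or_ne b 0 with rfl | hb
  · rw [add_zero] at hab; subst hab; simp
  by_cases hx : 0 < x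
  swap; · simp [hx, ENNReal.smul_top, ha]
  by_cases hy : 0 < y
  swap; · simp [hy, ENNReal.smul_top, hb]
  have hxy : 0 < a • x + b • y := hf.1 hx hy a.2 b.2 (by exact_mod_cast hab)
  dsimp only
  rw [if_pos hx, if_pos hy, if_pos hxy]
  simp only [ENNReal.smul_def, NNReal.smul_def, smul_eq_mul]
  calc ENNReal.ofReal (f (a * x + b * y)) ≤ ENNReal.ofReal (a * f x + b * f y) :=
        ENNReal.ofReal_le_ofReal (hf.2 hx hy a.2 b.2 (by exact_mod_cast hab))
    _ ≤ ENNReal.ofReal (a * f x) + ENNReal.ofReal (b * f y) := ENNReal.ofReal_add_le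
    _ = a * ENNReal.ofReal (f x) + b * ENNReal.ofReal (f y) := by
        rw [ENNReal.ofReal_mul a.coe_nonneg, ENNReal.ofReal_mul b.coe_nonneg,
          ENNReal.ofReal_coe_nnreal, ENNReal.ofReal_coe_nnreal]

theorem ConvexOn.biInf_fiber {E F : Type*} [AddCommMonoid E] [SMul ℝ≥0 E] [AddCommMonoid F]
    [Module ℝ≥0 F] {K : Set (E × F)} (hK : Convex ℝ≥0 K) {f : E → ℝ≥0∞}
    (hf : ConvexOn ℝ≥0 univ f) : ConvexOn ℝ≥0 univ fun s => ⨅ (b : E) (_ : (b, s) ∈ K), f b := by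
  refine ⟨convex_univ, fun s₁ _ s₂ _ a c _ _ hac => ?_⟩
  -- zero weights are split off because `0 * ⨅ ∅ = 0`, not `⨅ ∅ = ⊤`
  rcases eq_or_ne a 0 with rfl | ha
  · rw [zero_add] at hac; subst hac; simp
  rcases eq_or_ne c 0 with rfl | hc
  · rw [add_zero] at hac; subst hac; simp
  simp only [ENNReal.smul_def, smul_eq_mul, ENNReal.iInf_add, ENNReal.add_iInf,
    ENNReal.mul_iInf_of_ne (ENNReal.coe_ne_zero.2 ha) ENNReal.coe_ne_top,
    ENNReal.mul_iInf_of_ne (ENNReal.coe_ne_zero.2 hc) ENNReal.coe_ne_top]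
  refine le_iInf₂ fun b₂ h₂ => le_iInf₂ fun b₁ h₁ => ?_
  exact (iInf₂_le (a • b₁ + c • b₂) (hK h₁ h₂ a.2 c.2 hac)).trans
    (hf.2 trivial trivial a.2 c.2 hac)

noncomputable def capacitySlack (t σ b : ℝ) : ℝ :=
  (1 / 2) * Real.log (Real.exp (2 * t) + b / σ) - t

theorem capacitySlack_pos {t σ b : ℝ} (hσ : 0 < σ) (hb : 0 < b) : 0 < capacitySlack t σ b := by
  have h := Real.log_lt_log (Real.exp_pos (2 * t)) (lt_add_of_pos_right _ (div_pos hb hσ))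
  rw [Real.log_exp] at h
  unfold capacitySlack
  linarith

theorem concaveOn_capacitySlack (t : ℝ) {σ : ℝ} (hσ : 0 < σ) :
    ConcaveOn ℝ (Ioi 0) (capacitySlack t σ) := by
  refine ⟨convex_Ioi 0, fun x hx y hy a b ha hb hab => ?_⟩
  have hX : 0 < Real.exp (2 * t) + x / σ := by have : 0 < x := hx; positivity
  have hY : 0 < Real.exp (2 * t) + y / σ := by have : 0 < y := hy; positivity
  have hlog := strictConcaveOn_log_Ioi.concaveOn.2 hX hY ha hb hab
  have harg : a • (Real.exp (2 * t) + x / σ) + b • (Real.exp (2 * t) + y / σ) =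
      Real.exp (2 * t) + (a • x + b • y) / σ := by
    simp only [smul_eq_mul]
    linear_combination (Real.exp (2 * t)) * hab
  rw [harg] at hlog
  simp only [capacitySlack, smul_eq_mul] at hlog ⊢
  linear_combination (1 / 2) * hlog - t * hab

theorem convexOn_fCost {t σ : ℝ} (ht : 0 ≤ t) (hσ : 0 < σ) : ConvexOn ℝ≥0 univ (fCost t σ) :=
  ((concaveOn_capacitySlack t hσ).convexOn_div (fun _ hb => capacitySlack_pos hσ hb)
    ht).convexOn_ite_ofReal_top

def budgetConstraint (S : Type) [Fintype S] : Set ((S → ℝ) × ℝ) :=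
  {p | (∀ l, 0 ≤ p.1 l) ∧ ∑ l, p.1 l ≤ p.2}

theorem convex_budgetConstraint (S : Type) [Fintype S] : Convex ℝ≥0 (budgetConstraint S) := by
  rintro ⟨b₁, s₁⟩ ⟨hb₁, hs₁⟩ ⟨b₂, s₂⟩ ⟨hb₂, hs₂⟩ a c - - -
  refine ⟨fun l => ?_, ?_⟩
  · simp only [Prod.smul_mk, Prod.mk_add_mk, Pi.add_apply, Pi.smul_apply]
    exact add_nonneg (smul_nonneg a.2 (hb₁ l)) (smul_nonneg c.2 (hb₂ l))
  · simp only [Prod.smul_mk, Prod.mk_add_mk, Pi.add_apply, Pi.smul_apply, Finset.sum_add_distrib,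
      ← Finset.smul_sum]
    exact add_le_add (smul_le_smul_of_nonneg_left hs₁ a.2) (smul_le_smul_of_nonneg_left hs₂ c.2)

theorem xval_eq_biInf (S : Type) [Fintype S] (t σ : S → ℝ) (s : ℝ) :
    xval S t σ s =
      ⨅ (b : S → ℝ) (_ : (b, s) ∈ budgetConstraint S), ∑ l, fCost (t l) (σ l) (b l) := by
  calc xval S t σ s = sInf ((fun b => ∑ l, fCost (t l) (σ l) (b l)) ''
        {b | (b, s) ∈ budgetConstraint S}) := by
        rw [xval]
        congr 1
        ext v
        simp [budgetConstraint, eq_comm, and_assoc]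
    _ = _ := sInf_image

theorem convexOn_xval {S : Type} [Fintype S] {t σ : S → ℝ} (ht : ∀ l, 0 ≤ t l)
    (hσ : ∀ l, 0 < σ l) : ConvexOn ℝ≥0 univ (xval S t σ) := by
  have hcost : ConvexOn ℝ≥0 univ fun b : S → ℝ => ∑ l, fCost (t l) (σ l) (b l) :=
    ConvexOn.fun_sum _ convex_univ fun l _ =>
      (convexOn_fCost (ht l) (hσ l)).comp_linearMap (LinearMap.proj l : (S → ℝ) →ₗ[ℝ≥0] ℝ)
  rw [funext (xval_eq_biInf S t σ)]
  exact hcost.biInf_fiber (convex_budgetConstraint S)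

theorem xval_convex_general (S : Type) [Fintype S]
    (t σ : S → ℝ) (ht : ∀ l, 0 < t l) (hσ : ∀ l, 0 < σ l) :
    ∀ s₁ s₂ : ℝ, 0 < s₁ → 0 < s₂ → ∀ μ : ℝ, 0 ≤ μ → μ ≤ 1 →
      xval S t σ (μ * s₁ + (1 - μ) * s₂) ≤
        ENNReal.ofReal μ * xval S t σ s₁ + ENNReal.ofReal (1 - μ) * xval S t σ s₂ := by
  intro s₁ s₂ _ _ μ hμ₀ hμ₁
  have hμ₁' : 0 ≤ 1 - μ := sub_nonneg.2 hμ₁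
  have hsum : μ.toNNReal + (1 - μ).toNNReal = 1 := by
    rw [← Real.toNNReal_add hμ₀ hμ₁', add_sub_cancel, Real.toNNReal_one]
  have h := (convexOn_xval (fun l => (ht l).le) hσ).2 (mem_univ s₁) (mem_univ s₂)
    zero_le zero_le hsum
  simp only [NNReal.smul_def, Real.coe_toNNReal _ hμ₀, Real.coe_toNNReal _ hμ₁', smul_eq_mul,
    ENNReal.smul_def] at h
  exact h

/-- The value function `x` is convex on `(0, ∞)`: for all `s₁, s₂ > 0`
and `μ ∈ [0, 1]`, `x(μ·s₁ + (1 − μ)·s₂) ≤ μ·x(s₁) + (1 − μ)·x(s₂)`. -/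
theorem xval_convex (S : Type) [Fintype S] [Nonempty S]
    (t σ : S → ℝ) (ht : ∀ l, 0 < t l) (hσ : ∀ l, 0 < σ l) :
    ∀ s₁ s₂ : ℝ, 0 < s₁ → 0 < s₂ → ∀ μ : ℝ, 0 ≤ μ → μ ≤ 1 →
      xval S t σ (μ * s₁ + (1 - μ) * s₂) ≤
        ENNReal.ofReal μ * xval S t σ s₁ + ENNReal.ofReal (1 - μ) * xval S t σ s₂ :=
  xval_convex_general S t σ ht hσ
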